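/- Let H_C be n-dimensional with orthonormal basis {|i⟩}, H finite-dimensional, and for each i let {E_{i,δ} : δ ∈ Δ_i} be Kraus operators on H with ∑_δ E_{i,δ}† E_{i,δ} = I_H. Let F be their guarded composition along {|i⟩}. Then for every unit vector |φ⟩ = ∑_i α_i|i⟩ in H_C and unit vector |ψ⟩ in H: tr_{H_C}( ∑_{(δ_1,...,δ_n)} F(δ_1,...,δ_n)(|φ⟩⊗|ψ⟩)(⟨φ|⊗⟨ψ|)F(δ_1,...,δ_n)† ) = ∑_{i=1}^n |α_i|² · ∑_{δ∈Δ_i} E_{i,δ}|ψ⟩⟨ψ|E_{i,δ}†. -/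

import Mathlib

noncomputable section
open scoped InnerProductSpace
open Finset

/-- Coordinate model of the tensor product `H_C ⊗ H` along a fixed orthonormal
basis of the `n`-dimensional coin space `H_C`. -/
abbrev TensorSp (n : ℕ) (H : Type*) [NormedAddCommGroup H] [InnerProductSpace ℂ H] : Type _ :=
  PiLp 2 (fun _ : Fin n => H)

variable {n : ℕ} {H : Type*} [NormedAddCommGroup H] [InnerProductSpace ℂ H]

/-- the pure tensor `c ⊗ ψ`. -/
def pureTensor (c : EuclideanSpace ℂ (Fin n)) (ψ : H) : TensorSp n H :=
  WithLp.toLp 2 (fun i => c i • ψ)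

/-- the block-diagonal operator `∑ᵢ |i⟩⟨i| ⊗ Uᵢ`, i.e. the guarded composition of
the `Uᵢ` along the computational basis of the coin space. -/
def blockDiag (U : Fin n → (H →ₗ[ℂ] H)) : TensorSp n H →ₗ[ℂ] TensorSp n H where
  toFun x := WithLp.toLp 2 (fun i => U i (x i))
  map_add' x y := by ext i; simp [map_add]
  map_smul' c x := by ext i; simp [map_smul]

/-- `A ⊗ B` in the coordinate model, `A` acting on the coin space. -/
def tensorOp (A : EuclideanSpace ℂ (Fin n) →ₗ[ℂ] EuclideanSpace ℂ (Fin n))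
    (B : H →ₗ[ℂ] H) : TensorSp n H →ₗ[ℂ] TensorSp n H where
  toFun x := WithLp.toLp 2 (fun i => ∑ b : Fin n, A (EuclideanSpace.single b 1) i • B (x b))
  map_add' x y := by
    ext i; simp [map_add, smul_add, Finset.sum_add_distrib]
  map_smul' c x := by
    ext i; simp [map_smul, Finset.smul_sum, smul_comm c]

/-- `A ⊗ I_H`. -/
def tensorLeft (A : EuclideanSpace ℂ (Fin n) →ₗ[ℂ] EuclideanSpace ℂ (Fin n)) :
    TensorSp n H →ₗ[ℂ] TensorSp n H :=
  tensorOp A LinearMap.id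

/-- A linear operator is unitary iff it preserves inner products and is bijective. -/
def IsUnitaryOp {E : Type*} [NormedAddCommGroup E] [InnerProductSpace ℂ E]
    (A : E →ₗ[ℂ] E) : Prop :=
  (∀ x y : E, ⟪A x, A y⟫_ℂ = ⟪x, y⟫_ℂ) ∧ Function.Bijective A

/-- Positive (semidefinite) operator. -/
def IsPosOp {E : Type*} [NormedAddCommGroup E] [InnerProductSpace ℂ E]
    (A : E →ₗ[ℂ] E) : Prop :=
  ∀ x : E, (⟪x, A x⟫_ℂ).im = 0 ∧ 0 ≤ (⟪x, A x⟫_ℂ).re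

/-- Löwner order `A ⊑ B`. -/
def Loewner {E : Type*} [NormedAddCommGroup E] [InnerProductSpace ℂ E]
    (A B : E →ₗ[ℂ] E) : Prop :=
  IsPosOp (B - A)

section guarded
variable [FiniteDimensional ℂ H] {Δ : Fin n → Type*} [∀ k, Fintype (Δ k)]

/-- the coefficients `λ_{kδ}`. -/
def lam (F : ∀ k, Δ k → (H →ₗ[ℂ] H)) (k : Fin n) (δ : Δ k) : ℝ :=
  Real.sqrt ((LinearMap.trace ℂ H (LinearMap.adjoint (F k δ) ∘ₗ F k δ)).re /
    ∑ τ : Δ k, (LinearMap.trace ℂ H (LinearMap.adjoint (F k τ) ∘ₗ F k τ)).re)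

/-- the guarded composition `□ᵢ |i⟩ → Fᵢ` of operator-valued functions, evaluated at
`⊕ᵢ δᵢ`. -/
def guardedComp (F : ∀ k, Δ k → (H →ₗ[ℂ] H)) (δ : ∀ k, Δ k) :
    TensorSp n H →ₗ[ℂ] TensorSp n H where
  toFun x := WithLp.toLp 2 (fun i => (∏ k ∈ Finset.univ.erase i, lam F k (δ k)) • F i (δ i) (x i))
  map_add' x y := by ext i; simp [map_add, smul_add]
  map_smul' c x := by
    ext i; simp [map_smul, smul_comm c]

end guarded

/-- partial trace over the coin space of an operator on `H_C ⊗ H`. -/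
def coinProj (i : Fin n) : TensorSp n H →ₗ[ℂ] H where
  toFun x := x i
  map_add' _ _ := rfl
  map_smul' _ _ := rfl

def coinIncl (i : Fin n) : H →ₗ[ℂ] TensorSp n H where
  toFun ψ := WithLp.toLp 2 (Pi.single i ψ)
  map_add' x y := by ext j; simp [Pi.single_apply]; split_ifs <;> simp
  map_smul' c x := by ext j; simp [Pi.single_apply]

def trCoin (A : TensorSp n H →ₗ[ℂ] TensorSp n H) : H →ₗ[ℂ] H :=
  ∑ i : Fin n, coinProj i ∘ₗ A ∘ₗ coinIncl i

/-- the outer product `|x⟩⟨y|`. -/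
def outer {E : Type*} [NormedAddCommGroup E] [InnerProductSpace ℂ E]
    (x y : E) : E →ₗ[ℂ] E :=
  ((innerSL ℂ y).toLinearMap).smulRight x

/- The `i`-th diagonal coin block of `F(δ)|Φ⟩⟨Φ|F(δ)†` is the rank-one operator `|v⟩⟨v|`, where
`v = (∏_{k≠i} λ_{kδ_k}) αᵢ E_{i,δᵢ} ψ` is the `i`-th component of `F(δ)Φ`. Summing over all
`δ_k` with `k ≠ i` therefore only sees the weights `∏_{k≠i} λ_{kδ_k}²`, and these sum to `1`
because `∑_δ λ_{kδ}² = tr(∑_δ E_{k,δ}†E_{k,δ}) / tr(∑_δ E_{k,δ}†E_{k,δ}) = 1` once `H ≠ 0`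
(for `H = 0` both sides vanish). -/

section outer
variable {E F : Type*} [NormedAddCommGroup E] [InnerProductSpace ℂ E]
  [NormedAddCommGroup F] [InnerProductSpace ℂ F]

theorem outer_apply (x y z : E) : outer x y z = ⟪y, z⟫_ℂ • x := rfl

theorem outer_smul_smul (a : ℂ) (x : E) :
    outer (a • x) (a • x) = ((‖a‖ ^ 2 : ℝ) : ℂ) • outer x x := by
  ext z
  simp only [outer_apply, LinearMap.smul_apply, inner_smul_left, smul_smul]
  congr 1
  rw [Complex.ofReal_pow, ← Complex.conj_mul']
  ring

theorem comp_outer_comp_adjoint [FiniteDimensional ℂ E] [FiniteDimensional ℂ F]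
    (A : E →ₗ[ℂ] F) (x y : E) :
    A ∘ₗ outer x y ∘ₗ LinearMap.adjoint A = outer (A x) (A y) := by
  ext z
  simp [outer_apply, LinearMap.adjoint_inner_right]

end outer

@[simp]
theorem coinProj_apply (i : Fin n) (x : TensorSp n H) : coinProj i x = x i := rfl

theorem adjoint_coinProj [FiniteDimensional ℂ H] (i : Fin n) :
    LinearMap.adjoint (coinProj i : TensorSp n H →ₗ[ℂ] H) = coinIncl i := by
  symm
  rw [LinearMap.eq_adjoint_iff]
  intro v x
  rw [PiLp.inner_apply, sum_eq_single i (fun j _ hj => by simp [coinIncl, hj]) (by simp)]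
  simp [coinIncl]

theorem coinProj_comp_conj_outer_comp_coinIncl [FiniteDimensional ℂ H] (i : Fin n)
    (A : TensorSp n H →ₗ[ℂ] TensorSp n H) (x y : TensorSp n H) :
    coinProj i ∘ₗ (A ∘ₗ outer x y ∘ₗ LinearMap.adjoint A) ∘ₗ coinIncl i =
      outer (A x i) (A y i) :=
  calc coinProj i ∘ₗ (A ∘ₗ outer x y ∘ₗ LinearMap.adjoint A) ∘ₗ coinIncl i
      = (coinProj i ∘ₗ A) ∘ₗ outer x y ∘ₗ LinearMap.adjoint (coinProj i ∘ₗ A) := by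
        rw [LinearMap.adjoint_comp, adjoint_coinProj]; rfl
    _ = outer (A x i) (A y i) := comp_outer_comp_adjoint _ x y

theorem trCoin_sum {ι : Type*} (s : Finset ι) (A : ι → TensorSp n H →ₗ[ℂ] TensorSp n H) :
    trCoin (∑ j ∈ s, A j) = ∑ j ∈ s, trCoin (A j) := by
  ext h
  simp only [trCoin, LinearMap.sum_apply, LinearMap.comp_apply, map_sum]
  exact sum_comm

theorem sum_prod_erase_smul {ι : Type*} [Fintype ι] [DecidableEq ι] {Δ : ι → Type*}
    [∀ k, Fintype (Δ k)] {R M : Type*} [CommSemiring R] [AddCommMonoid M] [Module R M]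
    (g : ∀ k, Δ k → R) (hg : ∀ k, ∑ d, g k d = 1) (i : ι) (T : Δ i → M) :
    ∑ δ : (∀ k, Δ k), (∏ k ∈ univ.erase i, g k (δ k)) • T (δ i) = ∑ d, T d := by
  rw [← (Equiv.piSplitAt i Δ).symm.sum_comp, Fintype.sum_prod_type]
  refine sum_congr rfl fun d _ => ?_
  have hprod : ∀ r : ∀ j : {j // j ≠ i}, Δ j,
      ∏ k ∈ univ.erase i, g k ((Equiv.piSplitAt i Δ).symm (d, r) k) =
        ∏ j : {j // j ≠ i}, g j (r j) := fun r => by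
    rw [prod_subtype (univ.erase i) (p := (· ≠ i)) (by simp)]
    exact prod_congr rfl fun j _ => by simp [j.2]
  rw [sum_congr rfl fun r _ => by rw [hprod r]]
  simp only [Equiv.piSplitAt_symm_apply, dite_true, ← sum_smul, ← Fintype.prod_sum, hg,
    prod_const_one, one_smul]

section guarded
variable [FiniteDimensional ℂ H] {Δ : Fin n → Type*} [∀ k, Fintype (Δ k)]

theorem sum_lam_sq_eq_one [Nontrivial H] (E : ∀ k, Δ k → (H →ₗ[ℂ] H)) (k : Fin n)
    (hk : ∑ δ : Δ k, LinearMap.adjoint (E k δ) ∘ₗ E k δ = LinearMap.id) :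
    ∑ δ : Δ k, lam E k δ ^ 2 = 1 := by
  set t : Δ k → ℝ := fun δ => (LinearMap.trace ℂ H (LinearMap.adjoint (E k δ) ∘ₗ E k δ)).re
  have ht : ∀ δ, 0 ≤ t δ := fun δ =>
    (Complex.nonneg_iff.mp (LinearMap.isPositive_adjoint_comp_self (E k δ)).trace_nonneg).1
  have hsum : 0 < ∑ δ, t δ := by
    simp only [t, ← Complex.re_sum, ← map_sum, hk, LinearMap.trace_id, Complex.natCast_re]
    exact_mod_cast Module.finrank_pos
  have hlam : ∀ δ, lam E k δ ^ 2 = t δ / ∑ τ, t τ := fun δ =>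
    Real.sq_sqrt (div_nonneg (ht δ) hsum.le)
  rw [sum_congr rfl fun δ _ => hlam δ, ← sum_div, div_self hsum.ne']

theorem guardedComp_pureTensor_apply (E : ∀ k, Δ k → (H →ₗ[ℂ] H)) (δ : ∀ k, Δ k)
    (α : EuclideanSpace ℂ (Fin n)) (ψ : H) (i : Fin n) :
    guardedComp E δ (pureTensor α ψ) i =
      ((∏ k ∈ univ.erase i, lam E k (δ k) : ℝ) : ℂ) • E i (δ i) (α i • ψ) :=
  (Complex.coe_smul _ _).symm

theorem coinProj_comp_guardedComp_conj_pure_comp_coinIncl (E : ∀ k, Δ k → (H →ₗ[ℂ] H))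
    (δ : ∀ k, Δ k) (α : EuclideanSpace ℂ (Fin n)) (ψ : H) (i : Fin n) :
    coinProj i ∘ₗ (guardedComp E δ ∘ₗ outer (pureTensor α ψ) (pureTensor α ψ) ∘ₗ
        LinearMap.adjoint (guardedComp E δ)) ∘ₗ coinIncl i =
      (↑(‖α i‖ ^ 2) : ℂ) • (∏ k ∈ univ.erase i, (lam E k (δ k) : ℂ) ^ 2) •
        (E i (δ i) ∘ₗ outer ψ ψ ∘ₗ LinearMap.adjoint (E i (δ i))) := by
  rw [coinProj_comp_conj_outer_comp_coinIncl, comp_outer_comp_adjoint,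
    guardedComp_pureTensor_apply, map_smul, outer_smul_smul, outer_smul_smul, smul_comm,
    Complex.norm_real, Real.norm_eq_abs, sq_abs]
  push_cast
  rw [prod_pow]

end guarded

theorem trCoin_guardedComp_pure_general {n : ℕ} {H : Type*} [NormedAddCommGroup H]
    [InnerProductSpace ℂ H] [FiniteDimensional ℂ H]
    {Δ : Fin n → Type*} [∀ k, Fintype (Δ k)] (E : ∀ k, Δ k → (H →ₗ[ℂ] H))
    (hfull : ∀ k, ∑ δ : Δ k, LinearMap.adjoint (E k δ) ∘ₗ E k δ = LinearMap.id)
    (α : EuclideanSpace ℂ (Fin n)) (ψ : H) :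
    trCoin (∑ δ : (∀ k, Δ k),
        guardedComp E δ ∘ₗ outer (pureTensor α ψ) (pureTensor α ψ) ∘ₗ
          LinearMap.adjoint (guardedComp E δ))
      = ∑ i : Fin n, (↑(‖α i‖ ^ 2) : ℂ) •
          (∑ δi : Δ i, E i δi ∘ₗ outer ψ ψ ∘ₗ LinearMap.adjoint (E i δi)) := by
  rcases subsingleton_or_nontrivial H with hH | hH
  · exact Subsingleton.elim _ _
  have hweights : ∀ k, ∑ d, (lam E k d : ℂ) ^ 2 = 1 := fun k => by
    exact_mod_cast sum_lam_sq_eq_one E k (hfull k)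
  rw [trCoin_sum]
  simp only [trCoin, coinProj_comp_guardedComp_conj_pure_comp_coinIncl]
  rw [sum_comm]
  simp only [← smul_sum]
  exact sum_congr rfl fun i _ => congrArg _
    (sum_prod_erase_smul _ hweights i fun d => E i d ∘ₗ outer ψ ψ ∘ₗ LinearMap.adjoint (E i d))

/-- tracing out the coin after the guarded composition of full Kraus
families, applied to the pure state `|φ⟩⊗|ψ⟩` with `|φ⟩ = ∑ᵢ αᵢ|i⟩`, yields the
probabilistic mixture `∑ᵢ |αᵢ|² · Eᵢ(|ψ⟩⟨ψ|)`. -/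
theorem trCoin_guardedComp_pure {n : ℕ} {H : Type*} [NormedAddCommGroup H]
    [InnerProductSpace ℂ H] [FiniteDimensional ℂ H]
    {Δ : Fin n → Type*} [∀ k, Fintype (Δ k)] (E : ∀ k, Δ k → (H →ₗ[ℂ] H))
    (hfull : ∀ k, ∑ δ : Δ k, LinearMap.adjoint (E k δ) ∘ₗ E k δ = LinearMap.id)
    (α : EuclideanSpace ℂ (Fin n)) (hα : ‖α‖ = 1) (ψ : H) (hψ : ‖ψ‖ = 1) :
    trCoin (∑ δ : (∀ k, Δ k),
        guardedComp E δ ∘ₗ outer (pureTensor α ψ) (pureTensor α ψ) ∘ₗ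
          LinearMap.adjoint (guardedComp E δ))
      = ∑ i : Fin n, (↑(‖α i‖ ^ 2) : ℂ) •
          (∑ δi : Δ i, E i δi ∘ₗ outer ψ ψ ∘ₗ LinearMap.adjoint (E i δi)) :=
  trCoin_guardedComp_pure_general E hfull α ψ
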